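/- arXiv:2311.13155 — 2 statements merged into one kernel-verified Lean document; each statement's English description precedes it below -/
import Mathlib

section
/- For all x ∈ ℝ^N, t > 0 and λ ∈ ℝ, the fundamental solution satisfies G_{N,λ}(x,t) = t^{-N/4} · Σ_{m=0}^∞ ((-λ)^m t^{m/2} / m!) · (-Δ_z)^m g_N(x/t^{1/4}), where g_N(z) := (2π)^{-N} ∫_{ℝ^N} e^{-|ξ|⁴ + i⟨z,ξ⟩} dξ. -/
open scoped Real
open MeasureTheory

/-- The fundamental solution `G_{N,λ}(x,t)`. -/
noncomputable def Gfund (N : ℕ) (lam t : ℝ) (x : EuclideanSpace ℝ (Fin N)) : ℂ :=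
  (((2 * Real.pi) ^ (-(N : ℝ)) : ℝ) : ℂ) *
    ∫ ξ : EuclideanSpace ℝ (Fin N),
      Complex.exp (-(((‖ξ‖ ^ 4 + lam * ‖ξ‖ ^ 2) * t : ℝ) : ℂ)
        + Complex.I * ((inner ℝ x ξ : ℝ) : ℂ))

/-- The kernel `g_N(z) = (2π)^{-N} ∫ e^{-|ξ|⁴ + i⟨z,ξ⟩} dξ`. -/
noncomputable def gker (N : ℕ) (z : EuclideanSpace ℝ (Fin N)) : ℂ :=
  (((2 * Real.pi) ^ (-(N : ℝ)) : ℝ) : ℂ) *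
    ∫ ξ : EuclideanSpace ℝ (Fin N),
      Complex.exp (-((‖ξ‖ ^ 4 : ℝ) : ℂ) + Complex.I * ((inner ℝ z ξ : ℝ) : ℂ))

/-- The Laplacian of a function on `ℝ^N`, as the sum of second directional derivatives
along the coordinate directions. -/
noncomputable def lap (N : ℕ) (f : EuclideanSpace ℝ (Fin N) → ℂ)
    (x : EuclideanSpace ℝ (Fin N)) : ℂ :=
  ∑ i : Fin N, iteratedDeriv 2 (fun s : ℝ => f (x + s • EuclideanSpace.single i 1)) 0

/-- The `m`-th iterate of the negative Laplacian. -/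
noncomputable def negLapIter (N : ℕ) (m : ℕ) (f : EuclideanSpace ℝ (Fin N) → ℂ) :
    EuclideanSpace ℝ (Fin N) → ℂ :=
  (fun h x => -(lap N h x))^[m] f

/-!
Substituting `ξ = t^{-1/4} η` gives `G_{N,λ}(x, t) = t^{-N/4} (2π)^{-N} ∫ e^{-λ t^{1/2} |η|²}
e^{-|η|⁴} e^{i⟨z, η⟩} dη` with `z = t^{-1/4} x`. Expanding the first factor in its exponential
series and integrating term by term, which is legitimate because the series of absolute values sums
to the integrable function `e^{|λ| t^{1/2} |η|² - |η|⁴}`, gives the sum over `m` of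
`(-λ t^{1/2})^m / m!` times `(2π)^{-N} ∫ |η|^{2m} e^{-|η|⁴} e^{i⟨z, η⟩} dη`. Differentiating under
the integral sign, `-Δ_z` multiplies the weight of such an integral by `|η|²`, so the `m`-th
integral is `(-Δ)^m g_N(z)`.
-/

open scoped Complex InnerProductSpace

section QuarticDecay

variable {V : Type*} [NormedAddCommGroup V] [InnerProductSpace ℝ V] [FiniteDimensional ℝ V]
  [MeasurableSpace V] [BorelSpace V]

theorem integrable_exp_neg_sq_norm : Integrable fun v : V => Real.exp (-‖v‖ ^ 2) := by
  refine (GaussianFourier.integrable_cexp_neg_mul_sq_norm_add (V := V) (b := 1) (by simp) 0 0).norm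
    |>.congr (ae_of_all _ fun v => ?_)
  simp [Complex.norm_exp, ← Complex.ofReal_pow]

theorem pow_mul_exp_sub_pow_four_le (k : ℕ) (c : ℝ) {r : ℝ} (hr : 0 ≤ r) :
    r ^ k * Real.exp (c * r ^ 2 - r ^ 4) ≤
      k.factorial * Real.exp (((c + 2) / 2) ^ 2 + 1 / 4) * Real.exp (-r ^ 2) := by
  have hpow : r ^ k ≤ k.factorial * Real.exp r := by
    have := Real.pow_div_factorial_le_exp r hr k
    rwa [div_le_iff₀' (by positivity)] at this
  have hexp : r + (c * r ^ 2 - r ^ 4) ≤ ((c + 2) / 2) ^ 2 + 1 / 4 + -r ^ 2 := by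
    nlinarith [sq_nonneg (r - 1 / 2), sq_nonneg (r ^ 2 - (c + 2) / 2)]
  calc r ^ k * Real.exp (c * r ^ 2 - r ^ 4)
      ≤ k.factorial * Real.exp r * Real.exp (c * r ^ 2 - r ^ 4) := by gcongr
    _ ≤ k.factorial * Real.exp (((c + 2) / 2) ^ 2 + 1 / 4 + -r ^ 2) := by
        rw [mul_assoc, ← Real.exp_add]; gcongr
    _ = _ := by rw [Real.exp_add, mul_assoc]

theorem integrable_pow_norm_mul_exp_sub_pow_four (k : ℕ) (c : ℝ) :
    Integrable fun ξ : V => ‖ξ‖ ^ k * Real.exp (c * ‖ξ‖ ^ 2 - ‖ξ‖ ^ 4) := by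
  refine (integrable_exp_neg_sq_norm.const_mul
    (k.factorial * Real.exp (((c + 2) / 2) ^ 2 + 1 / 4))).mono' (by fun_prop)
    (ae_of_all _ fun ξ => ?_)
  rw [Real.norm_of_nonneg (by positivity)]
  exact pow_mul_exp_sub_pow_four_le k c (norm_nonneg ξ)

theorem integrable_pow_norm_mul_exp_neg_pow_four (k : ℕ) :
    Integrable fun ξ : V => ‖ξ‖ ^ k * Real.exp (-‖ξ‖ ^ 4) := by
  simpa using integrable_pow_norm_mul_exp_sub_pow_four (V := V) k 0

theorem integrable_exp_mul_sq_norm_mul_exp_neg_pow_four (c : ℝ) :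
    Integrable fun ξ : V => Real.exp (c * ‖ξ‖ ^ 2) * Real.exp (-‖ξ‖ ^ 4) := by
  simpa [← Real.exp_add, sub_eq_add_neg] using integrable_pow_norm_mul_exp_sub_pow_four (V := V) 0 c

end QuarticDecay

theorem rpow_neg_one_div_four_pow {t : ℝ} (ht : 0 < t) (n : ℕ) :
    (t ^ (-(1 : ℝ) / 4)) ^ n = t ^ (-(n : ℝ) / 4) := by
  rw [← Real.rpow_mul_natCast ht.le]
  ring_nf

theorem quartic_symbol_rpow_smul {V : Type*} [NormedAddCommGroup V] [NormedSpace ℝ V] {t : ℝ}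
    (ht : 0 < t) (lam : ℝ) (η : V) :
    (‖t ^ (-(1 : ℝ) / 4) • η‖ ^ 4 + lam * ‖t ^ (-(1 : ℝ) / 4) • η‖ ^ 2) * t =
      ‖η‖ ^ 4 + lam * t ^ ((1 : ℝ) / 2) * ‖η‖ ^ 2 := by
  have h4 : (t ^ (-(1 : ℝ) / 4)) ^ 4 * t = 1 := by
    rw [rpow_neg_one_div_four_pow ht, show -((4 : ℕ) : ℝ) / 4 = -1 by norm_num,
      Real.rpow_neg_one, inv_mul_cancel₀ ht.ne']
  have h2 : (t ^ (-(1 : ℝ) / 4)) ^ 2 * t = t ^ ((1 : ℝ) / 2) := by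
    rw [rpow_neg_one_div_four_pow ht, ← Real.rpow_add_one ht.ne']
    norm_num
  rw [norm_smul, Real.norm_of_nonneg (by positivity)]
  linear_combination ‖η‖ ^ 4 * h4 + lam * ‖η‖ ^ 2 * h2

theorem Real.hasSum_pow_div_factorial (x : ℝ) :
    HasSum (fun n => x ^ n / n.factorial) (Real.exp x) :=
  Real.exp_eq_exp_ℝ ▸ NormedSpace.expSeries_div_hasSum_exp x

section ExpSeries

variable {α E : Type*} [MeasurableSpace α] {μ : Measure α} [NormedAddCommGroup E]
  [NormedSpace ℝ E]

theorem hasSum_integral_exp_mul_smul (a : ℝ) {g : α → ℝ} {F : α → E}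
    (hg : AEStronglyMeasurable g μ) (hF : AEStronglyMeasurable F μ)
    (hint : Integrable (fun x => Real.exp |a * g x| * ‖F x‖) μ) :
    HasSum (fun m : ℕ => (a ^ m / m.factorial) • ∫ x, g x ^ m • F x ∂μ)
      (∫ x, Real.exp (a * g x) • F x ∂μ) := by
  have hterm : ∀ x, ∀ m : ℕ,
      ‖(a ^ m / m.factorial) • g x ^ m • F x‖ = |a * g x| ^ m / m.factorial * ‖F x‖ := by
    intro x m
    rw [norm_smul, norm_smul, Real.norm_eq_abs, Real.norm_eq_abs, abs_div, abs_pow, abs_pow,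
      Nat.abs_cast, abs_mul, mul_pow]
    ring
  have hlim := hasSum_integral_of_dominated_convergence (μ := μ)
    (F := fun (m : ℕ) x => (a ^ m / m.factorial) • g x ^ m • F x)
    (fun m x => |a * g x| ^ m / m.factorial * ‖F x‖)
    (fun m => ((hg.pow m).smul hF).const_smul _)
    (fun m => ae_of_all _ fun x => (hterm x m).le)
    (ae_of_all _ fun x => (Real.summable_pow_div_factorial _).mul_right _)
    (hint.congr (ae_of_all _ fun x => ((Real.hasSum_pow_div_factorial _).mul_right _).tsum_eq.symm))
    (ae_of_all _ fun x => by
      simpa only [smul_smul, ← mul_pow, div_mul_eq_mul_div] using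
        (Real.hasSum_pow_div_factorial (a * g x)).smul_const (F x))
  simpa only [integral_smul] using hlim

end ExpSeries

section OscillatoryIntegral

variable {V : Type*} [NormedAddCommGroup V] [InnerProductSpace ℝ V] [FiniteDimensional ℝ V]
  [MeasurableSpace V] [BorelSpace V]

noncomputable def oscIntegral (φ : V → ℝ) (z : V) : ℂ :=
  ∫ ξ, φ ξ • cexp (Complex.I * ⟪z, ξ⟫_ℝ)

theorem integrable_oscIntegrand {φ : V → ℝ} (hφ : Integrable φ) (z : V) :
    Integrable fun ξ => φ ξ • cexp (Complex.I * ⟪z, ξ⟫_ℝ) :=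
  hφ.smul_bdd 1 (by fun_prop) (ae_of_all _ fun ξ => (Complex.norm_exp_I_mul_ofReal _).le)

theorem oscIntegral_sum {ι : Type*} (s : Finset ι) {φ : ι → V → ℝ}
    (hφ : ∀ i ∈ s, Integrable (φ i)) (z : V) :
    ∑ i ∈ s, oscIntegral (φ i) z = oscIntegral (fun ξ => ∑ i ∈ s, φ i ξ) z := by
  simp only [oscIntegral, Finset.sum_smul]
  exact (integral_finsetSum s fun i hi => integrable_oscIntegrand (hφ i hi) z).symm

theorem integrable_inner_mul {φ : V → ℝ} (hφ : AEStronglyMeasurable φ)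
    (h : Integrable fun ξ => ‖ξ‖ * φ ξ) (v : V) : Integrable fun ξ => ⟪v, ξ⟫_ℝ * φ ξ := by
  refine (h.norm.const_mul ‖v‖).mono' (by fun_prop) (ae_of_all _ fun ξ => ?_)
  rw [norm_mul, norm_mul, norm_norm, ← mul_assoc]
  gcongr
  exact norm_inner_le_norm v ξ

theorem hasDerivAt_oscIntegral_add_smul {φ : V → ℝ} (h0 : Integrable φ)
    (h1 : Integrable fun ξ => ‖ξ‖ * φ ξ) (x v : V) (s₀ : ℝ) :
    HasDerivAt (fun s : ℝ => oscIntegral φ (x + s • v))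
      (Complex.I * oscIntegral (fun ξ => ⟪v, ξ⟫_ℝ * φ ξ) (x + s₀ • v)) s₀ := by
  have hphase : ∀ ξ (s : ℝ), HasDerivAt (fun s : ℝ => φ ξ • cexp (Complex.I * ⟪x + s • v, ξ⟫_ℝ))
      (Complex.I * ((⟪v, ξ⟫_ℝ * φ ξ) • cexp (Complex.I * ⟪x + s • v, ξ⟫_ℝ))) s := by
    intro ξ s
    have hline : HasDerivAt (fun s : ℝ => ⟪x + s • v, ξ⟫_ℝ) ⟪v, ξ⟫_ℝ s := by
      simpa [inner_add_left, real_inner_smul_left] using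
        ((hasDerivAt_id s).mul_const ⟪v, ξ⟫_ℝ).const_add ⟪x, ξ⟫_ℝ
    refine ((hline.ofReal_comp.const_mul Complex.I).cexp.const_smul (φ ξ)).congr_deriv ?_
    simp only [Complex.real_smul, Complex.ofReal_mul]
    ring
  have key := hasDerivAt_integral_of_dominated_loc_of_deriv_le (μ := volume)
    (bound := fun ξ => ‖v‖ * ‖‖ξ‖ * φ ξ‖) (x₀ := s₀) Filter.univ_mem
    (Filter.Eventually.of_forall fun s => (integrable_oscIntegrand h0 _).aestronglyMeasurable)
    (integrable_oscIntegrand h0 _)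
    ((integrable_oscIntegrand (integrable_inner_mul h0.aestronglyMeasurable h1 v) _).const_mul
      _).aestronglyMeasurable
    (ae_of_all _ fun ξ s _ => ?_) (h1.norm.const_mul _) (ae_of_all _ fun ξ s _ => hphase ξ s)
  · simpa only [oscIntegral, integral_const_mul] using key.2
  · rw [norm_mul, Complex.norm_I, one_mul, norm_smul, Complex.norm_exp_I_mul_ofReal, mul_one,
      norm_mul, norm_mul, norm_norm, ← mul_assoc]
    gcongr
    exact norm_inner_le_norm v ξ

theorem integrable_norm_mul_inner_mul {φ : V → ℝ} (h1 : Integrable fun ξ => ‖ξ‖ * φ ξ)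
    (h2 : Integrable fun ξ => ‖ξ‖ ^ 2 * φ ξ) (v : V) :
    Integrable fun ξ => ‖ξ‖ * (⟪v, ξ⟫_ℝ * φ ξ) :=
  (integrable_inner_mul h1.aestronglyMeasurable (h2.congr (ae_of_all _ fun ξ => by ring)) v).congr
    (ae_of_all _ fun ξ => by ring)

theorem iteratedDeriv_two_oscIntegral_add_smul {φ : V → ℝ} (h0 : Integrable φ)
    (h1 : Integrable fun ξ => ‖ξ‖ * φ ξ) (h2 : Integrable fun ξ => ‖ξ‖ ^ 2 * φ ξ) (x v : V) :
    iteratedDeriv 2 (fun s : ℝ => oscIntegral φ (x + s • v)) 0 =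
      -oscIntegral (fun ξ => ⟪v, ξ⟫_ℝ ^ 2 * φ ξ) x := by
  have hderiv : deriv (fun s : ℝ => oscIntegral φ (x + s • v)) =
      fun s => Complex.I * oscIntegral (fun ξ => ⟪v, ξ⟫_ℝ * φ ξ) (x + s • v) :=
    funext fun s => (hasDerivAt_oscIntegral_add_smul h0 h1 x v s).deriv
  rw [iteratedDeriv_succ, iteratedDeriv_one, hderiv,
    ((hasDerivAt_oscIntegral_add_smul (integrable_inner_mul h0.aestronglyMeasurable h1 v)
      (integrable_norm_mul_inner_mul h1 h2 v) x v 0).const_mul Complex.I).deriv,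
    zero_smul, add_zero, ← mul_assoc, Complex.I_mul_I, neg_one_mul]
  simp_rw [← mul_assoc, ← sq]

theorem ofReal_mul_integral_cexp_eq_oscIntegral (c : ℝ) (f : V → ℝ) (z : V) :
    (c : ℂ) * ∫ ξ, cexp (-(f ξ : ℂ) + Complex.I * ⟪z, ξ⟫_ℝ) =
      oscIntegral (fun ξ => c * Real.exp (-f ξ)) z := by
  rw [oscIntegral, ← integral_const_mul]
  congr 1 with ξ
  rw [Complex.exp_add, Complex.real_smul]
  push_cast
  ring

theorem oscIntegral_eq_pow_mul_oscIntegral_comp_smul {R : ℝ} (hR : 0 < R) (φ : V → ℝ) (z : V) :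
    oscIntegral φ z =
      R ^ Module.finrank ℝ V * oscIntegral (fun η => φ (R • η)) (R • z) := by
  have h := Measure.integral_comp_smul volume (fun ξ => φ ξ • cexp (Complex.I * ⟪z, ξ⟫_ℝ)) R
  simp only [real_inner_smul_right, ← real_inner_smul_left] at h
  rw [oscIntegral, oscIntegral, h, abs_of_pos (by positivity), Complex.real_smul, ← mul_assoc,
    ← Complex.ofReal_pow, ← Complex.ofReal_mul, mul_inv_cancel₀ (by positivity),
    Complex.ofReal_one, one_mul]

theorem hasSum_oscIntegral_exp_mul (a : ℝ) {g φ : V → ℝ} (hg : AEStronglyMeasurable g)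
    (hφ : AEStronglyMeasurable φ) (hint : Integrable fun ξ => Real.exp |a * g ξ| * φ ξ) (z : V) :
    HasSum (fun m : ℕ => (a ^ m / m.factorial) • oscIntegral (fun ξ => g ξ ^ m * φ ξ) z)
      (oscIntegral (fun ξ => Real.exp (a * g ξ) * φ ξ) z) := by
  simp only [oscIntegral, mul_smul]
  refine hasSum_integral_exp_mul_smul a hg (hφ.smul (by fun_prop)) (hint.norm.congr
    (ae_of_all _ fun ξ => ?_))
  dsimp only
  rw [norm_smul, Complex.norm_exp_I_mul_ofReal, mul_one, norm_mul,
    Real.norm_of_nonneg (by positivity)]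

end OscillatoryIntegral

theorem lap_oscIntegral {N : ℕ} {φ : EuclideanSpace ℝ (Fin N) → ℝ} (h0 : Integrable φ)
    (h1 : Integrable fun ξ => ‖ξ‖ * φ ξ) (h2 : Integrable fun ξ => ‖ξ‖ ^ 2 * φ ξ)
    (x : EuclideanSpace ℝ (Fin N)) :
    lap N (oscIntegral φ) x = -oscIntegral (fun ξ => ‖ξ‖ ^ 2 * φ ξ) x := by
  have hcoord : ∀ i (ξ : EuclideanSpace ℝ (Fin N)), ⟪EuclideanSpace.single i 1, ξ⟫_ℝ = ξ i := by
    simp [EuclideanSpace.inner_single_left]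
  have hint : ∀ i, Integrable fun ξ : EuclideanSpace ℝ (Fin N) => ξ i ^ 2 * φ ξ := fun i =>
    let e := EuclideanSpace.single i (1 : ℝ)
    (integrable_inner_mul (integrable_inner_mul h0.aestronglyMeasurable h1 e).aestronglyMeasurable
      (integrable_norm_mul_inner_mul h1 h2 e) e).congr
      (ae_of_all _ fun ξ => by simp only [e, hcoord]; ring)
  simp only [lap, iteratedDeriv_two_oscIntegral_add_smul h0 h1 h2, hcoord, Finset.sum_neg_distrib,
    oscIntegral_sum _ fun i _ => hint i, ← Finset.sum_mul, ← EuclideanSpace.real_norm_sq_eq]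

theorem negLapIter_oscIntegral {N : ℕ} {φ : EuclideanSpace ℝ (Fin N) → ℝ}
    (hφ : ∀ k : ℕ, Integrable fun ξ => ‖ξ‖ ^ k * φ ξ) (m : ℕ) :
    negLapIter N m (oscIntegral φ) = oscIntegral fun ξ => (‖ξ‖ ^ 2) ^ m * φ ξ := by
  induction m with
  | zero => simp [negLapIter]
  | succ m ih =>
    have hmom : ∀ k : ℕ, Integrable fun ξ => ‖ξ‖ ^ k * ((‖ξ‖ ^ 2) ^ m * φ ξ) := fun k =>
      (hφ (k + 2 * m)).congr (ae_of_all _ fun ξ => by ring)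
    funext x
    rw [negLapIter, Function.iterate_succ_apply', ← negLapIter, ih,
      lap_oscIntegral (by simpa using hmom 0) (by simpa using hmom 1) (hmom 2), neg_neg]
    simp_rw [← mul_assoc, ← pow_succ']

theorem Gfund_series_expansion_general (N : ℕ) (lam t : ℝ) (ht : 0 < t)
    (x : EuclideanSpace ℝ (Fin N)) :
    Gfund N lam t x =
      ((t ^ (-(N : ℝ) / 4) : ℝ) : ℂ) *
        ∑' m : ℕ, (((-lam) ^ m * t ^ ((m : ℝ) / 2) / m.factorial : ℝ) : ℂ) *
          negLapIter N m (gker N) ((t ^ (-(1 : ℝ) / 4) : ℝ) • x) := by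
  set K : ℝ := (2 * π) ^ (-(N : ℝ))
  set a : ℝ := -lam * t ^ ((1 : ℝ) / 2) with ha
  have hrescale : (fun η : EuclideanSpace ℝ (Fin N) => K * Real.exp
      (-((‖t ^ (-(1 : ℝ) / 4) • η‖ ^ 4 + lam * ‖t ^ (-(1 : ℝ) / 4) • η‖ ^ 2) * t))) =
      fun η => Real.exp (a * ‖η‖ ^ 2) * (K * Real.exp (-‖η‖ ^ 4)) := by
    funext η
    rw [quartic_symbol_rpow_smul ht, mul_left_comm, ← Real.exp_add, ha]
    ring_nf
  have hmoments (k : ℕ) : Integrable fun ξ : EuclideanSpace ℝ (Fin N) =>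
      ‖ξ‖ ^ k * (K * Real.exp (-‖ξ‖ ^ 4)) :=
    ((integrable_pow_norm_mul_exp_neg_pow_four k).const_mul K).congr
      (ae_of_all _ fun ξ => mul_left_comm _ _ _)
  have hexp : Integrable fun ξ : EuclideanSpace ℝ (Fin N) =>
      Real.exp |a * ‖ξ‖ ^ 2| * (K * Real.exp (-‖ξ‖ ^ 4)) := by
    simpa only [abs_mul a, abs_pow, abs_norm, mul_left_comm] using
      (integrable_exp_mul_sq_norm_mul_exp_neg_pow_four (|a|)).const_mul K
  have hcoef (m : ℕ) : (-lam) ^ m * t ^ ((m : ℝ) / 2) = a ^ m := by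
    rw [mul_pow, ← Real.rpow_mul_natCast ht.le]
    ring_nf
  have hgker : gker N = oscIntegral fun ξ => K * Real.exp (-‖ξ‖ ^ 4) :=
    funext (ofReal_mul_integral_cexp_eq_oscIntegral K fun ξ => ‖ξ‖ ^ 4)
  rw [show Gfund N lam t x = _ from ofReal_mul_integral_cexp_eq_oscIntegral K _ x,
    oscIntegral_eq_pow_mul_oscIntegral_comp_smul (Real.rpow_pos_of_pos ht _),
    finrank_euclideanSpace_fin, hrescale,
    ← (hasSum_oscIntegral_exp_mul a (by fun_prop) (by fun_prop) hexp _).tsum_eq,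
    ← Complex.ofReal_pow, rpow_neg_one_div_four_pow ht, hgker]
  refine congrArg _ (tsum_congr fun m => ?_)
  rw [negLapIter_oscIntegral hmoments, hcoef, Complex.real_smul]

theorem Gfund_series_expansion (N : ℕ) (hN : 1 ≤ N) (lam t : ℝ) (ht : 0 < t)
    (x : EuclideanSpace ℝ (Fin N)) :
    Gfund N lam t x =
      ((t ^ (-(N : ℝ) / 4) : ℝ) : ℂ) *
        ∑' m : ℕ, (((-lam) ^ m * t ^ ((m : ℝ) / 2) / m.factorial : ℝ) : ℂ) *
          negLapIter N m (gker N) ((t ^ (-(1 : ℝ) / 4) : ℝ) • x) :=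
  Gfund_series_expansion_general N lam t ht x
end

section
/- Fix a > 0 and let Ψ : [0,∞) → ℝ be continuous with Ψ(0)=0 and the properties: Ψ(r) > 0 for r > 0, Ψ is increasing on [0, r₁⁺] and on each [r_k⁻, r_{k+1}⁺], decreasing on each [r_k⁺, r_k⁻], Ψ(r_k⁺) ≤ Ψ(r₁⁺) for all k, Ψ(r_k⁻) ≥ Ψ(r₁⁻) for all k, and the numerical bounds Ψ(r₁⁺/3) > 0.32584, Ψ(r₁⁺) < 0.5523, Ψ(r₁⁻) > 0.4938, together with r₁⁺ > 3.453 and r₁⁻ < 6.785. Then the function I(r) := Ψ(r/(3a)) − 3Ψ(r/(2a)) + 3Ψ(r/a) satisfies I(r) > 0 for all r > 0. -/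
open Filter Set

theorem threshold_combination_pos (a : ℝ) (ha : 0 < a)
    (Ψ : ℝ → ℝ) (hΨcont : Continuous Ψ) (hΨ0 : Ψ 0 = 0)
    (rp rm : ℕ → ℝ) (hrm0 : rm 0 = 0)
    (horder1 : ∀ k : ℕ, rm k < rp (k + 1))
    (horder2 : ∀ k : ℕ, 1 ≤ k → rp k < rm k)
    (hΨpos : ∀ r : ℝ, 0 < r → 0 < Ψ r)
    (hmono : ∀ k : ℕ, MonotoneOn Ψ (Icc (rm k) (rp (k + 1))))
    (hanti : ∀ k : ℕ, 1 ≤ k → AntitoneOn Ψ (Icc (rp k) (rm k)))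
    (hmax : ∀ k : ℕ, 1 ≤ k → Ψ (rp k) ≤ Ψ (rp 1))
    (hmin : ∀ k : ℕ, 1 ≤ k → Ψ (rm 1) ≤ Ψ (rm k))
    (hnum1 : 0.32584 < Ψ (rp 1 / 3))
    (hnum2 : Ψ (rp 1) < 0.5523)
    (hnum3 : 0.4938 < Ψ (rm 1))
    (hnum4 : 3.453 < rp 1)
    (hnum5 : rm 1 < 6.785)
    (htend : Tendsto rp atTop atTop) :
    ∀ r : ℝ, 0 < r →
      0 < Ψ (r / (3 * a)) - 3 * Ψ (r / (2 * a)) + 3 * Ψ (r / a) := by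
  have hrp1pos : 0 < rp 1 := hrm0 ▸ horder1 0
  -- Lemma A: Ψ is globally bounded above by Ψ (rp 1)
  have hA : ∀ k : ℕ, ∀ r : ℝ, 0 ≤ r → r ≤ rp (k + 1) → Ψ r ≤ Ψ (rp 1) := by
    intro k
    induction k with
    | zero =>
      intro r hr0 hr1
      exact hmono 0 ⟨by rw [hrm0]; exact hr0, hr1⟩
        ⟨le_of_lt (horder1 0), le_refl _⟩ hr1
    | succ k ih =>
      intro r hr0 hr2
      rcases le_or_gt r (rp (k + 1)) with h | h
      · exact ih r hr0 h
      rcases le_or_gt r (rm (k + 1)) with h2 | h2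
      · have h3 : Ψ r ≤ Ψ (rp (k + 1)) :=
          hanti (k + 1) (by omega)
            ⟨le_refl _, le_of_lt (horder2 (k + 1) (by omega))⟩
            ⟨le_of_lt h, h2⟩ (le_of_lt h)
        exact h3.trans (hmax (k + 1) (by omega))
      · have h3 : Ψ r ≤ Ψ (rp (k + 2)) :=
          hmono (k + 1) ⟨le_of_lt h2, hr2⟩
            ⟨le_of_lt (horder1 (k + 1)), le_refl _⟩ hr2
        exact h3.trans (hmax (k + 2) (by omega))
  -- Lemma B: Ψ is bounded below by Ψ (rm 1) on [rp 1, ∞)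
  have hB : ∀ k : ℕ, ∀ r : ℝ, rp 1 ≤ r → r ≤ rp (k + 1) → Ψ (rm 1) ≤ Ψ r := by
    intro k
    induction k with
    | zero =>
      intro r hr0 hr1
      have hreq : r = rp 1 := le_antisymm hr1 hr0
      have : Ψ (rm 1) ≤ Ψ (rp 1) :=
        hanti 1 le_rfl ⟨le_refl _, le_of_lt (horder2 1 le_rfl)⟩
          ⟨le_of_lt (horder2 1 le_rfl), le_refl _⟩ (le_of_lt (horder2 1 le_rfl))
      rw [hreq]; exact this
    | succ k ih =>
      intro r hr0 hr2
      rcases le_or_gt r (rp (k + 1)) with h | h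
      · exact ih r hr0 h
      rcases le_or_gt r (rm (k + 1)) with h2 | h2
      · have h3 : Ψ (rm (k + 1)) ≤ Ψ r :=
          hanti (k + 1) (by omega) ⟨le_of_lt h, h2⟩
            ⟨le_of_lt (horder2 (k + 1) (by omega)), le_refl _⟩ h2
        exact (hmin (k + 1) (by omega)).trans h3
      · have h3 : Ψ (rm (k + 1)) ≤ Ψ r :=
          hmono (k + 1) ⟨le_refl _, (le_of_lt h2).trans hr2⟩
            ⟨le_of_lt h2, hr2⟩ (le_of_lt h2)
        exact (hmin (k + 1) (by omega)).trans h3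
  -- Globalize using htend
  have hcover : ∀ r : ℝ, ∃ k : ℕ, r ≤ rp (k + 1) := by
    intro r
    obtain ⟨k, hk1, hk2⟩ := ((htend.eventually_ge_atTop r).and (eventually_ge_atTop 1)).exists
    match k, hk2 with
    | (n + 1), _ => exact ⟨n, hk1⟩
  have hAg : ∀ r : ℝ, 0 ≤ r → Ψ r ≤ Ψ (rp 1) := by
    intro r hr
    obtain ⟨k, hk⟩ := hcover r
    exact hA k r hr hk
  have hBg : ∀ r : ℝ, rp 1 ≤ r → Ψ (rm 1) ≤ Ψ r := by
    intro r hr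
    obtain ⟨k, hk⟩ := hcover r
    exact hB k r hr hk
  -- Main argument
  intro r hr
  rcases le_or_gt (r / a) (rp 1) with h | h
  · -- all three points lie in [0, rp 1], where Ψ is monotone
    have h21 : r / (2 * a) ≤ r / a := by
      rw [div_le_div_iff₀ (by positivity) ha]; nlinarith
    have hm : Ψ (r / (2 * a)) ≤ Ψ (r / a) :=
      hmono 0 ⟨by rw [hrm0]; positivity, h21.trans h⟩
        ⟨by rw [hrm0]; positivity, h⟩ h21
    have hp : 0 < Ψ (r / (3 * a)) := hΨpos _ (by positivity)
    linarith
  · -- r/a > rp 1 : use the numerical bounds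
    have hBa : Ψ (rm 1) ≤ Ψ (r / a) := hBg _ (le_of_lt h)
    have hA2 : Ψ (r / (2 * a)) ≤ Ψ (rp 1) := hAg _ (by positivity)
    have h13 : rp 1 / 3 ≤ r / (3 * a) := by
      rw [div_le_div_iff₀ (by norm_num) (by positivity)]
      nlinarith [(le_div_iff₀ ha).mp (le_of_lt h)]
    have h3 : 0.32584 < Ψ (r / (3 * a)) := by
      rcases le_or_gt (r / (3 * a)) (rp 1) with h' | h'
      · have : Ψ (rp 1 / 3) ≤ Ψ (r / (3 * a)) :=
          hmono 0 ⟨by rw [hrm0]; positivity, by linarith⟩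
            ⟨by rw [hrm0]; positivity, h'⟩ h13
        linarith
      · have := hBg _ (le_of_lt h')
        linarith
    linarith
end
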